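/- arXiv:2408.02894 — 2 statements merged into one kernel-verified Lean document; each statement's English description precedes it below -/
import Mathlib

section
/- (Block Trivial Lemma) Let E be a linear operator on ℂ^d with orthonormal basis B. Let S ⊆ B be nonempty with |S| = s and let {|ψ_i⟩}_{i=0}^{s-1} be a family of pairwise orthogonal nonzero vectors spanning span(S) such that ⟨ψ_i| E |ψ_j⟩ = 0 for all i ≠ j. Suppose there exists |x⟩ ∈ S with ⟨x| E |y⟩ = 0 for all |y⟩ ∈ S \ {|x⟩} and ⟨x|ψ_j⟩ ≠ 0 for all j. Then ⟨y| E |z⟩ = 0 for all distinct |y⟩, |z⟩ ∈ S, and ⟨y| E |y⟩ = ⟨z| E |z⟩ for all |y⟩, |z⟩ ∈ S. -/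
/-!
Write `V` for the span of `S`. Because the `ψ j` are orthogonal and `E` is diagonal on them,
`E ψ j - μ j • ψ j` is orthogonal to `V`, with `μ j` the Rayleigh quotient of `ψ j`. The hypothesis
on `x` says that `⟨x|E|v⟩ = c ⟨x|v⟩` for every `v ∈ V`, where `c = ⟨x|E|x⟩`; testing this on
`v = ψ j` and cancelling `⟨x|ψ j⟩ ≠ 0` gives `μ j = c` for all `j`. Hence the compression of `E`
to `V` is `c • id`, which is the claim.
-/

open Submodule

section InnerProductSpace

variable {𝕜 F ι : Type*} [RCLike 𝕜] [NormedAddCommGroup F] [InnerProductSpace 𝕜 F]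

local notation "⟪" x ", " y "⟫" => inner 𝕜 x y

theorem inner_eq_mul_inner_of_mem_span_left {s : Set F} {a b : F} {μ : 𝕜}
    (h : ∀ u ∈ s, ⟪u, a⟫ = μ * ⟪u, b⟫) {w : F} (hw : w ∈ span 𝕜 s) :
    ⟪w, a⟫ = μ * ⟪w, b⟫ :=
  LinearMap.eqOn_span (f := (innerₛₗ 𝕜).flip a) (g := μ • (innerₛₗ 𝕜).flip b) h hw

theorem inner_map_eq_mul_inner_of_mem_span_right {s : Set F} {w : F} {T : F →ₗ[𝕜] F} {c : 𝕜}
    (h : ∀ u ∈ s, ⟪w, T u⟫ = c * ⟪w, u⟫) {v : F} (hv : v ∈ span 𝕜 s) :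
    ⟪w, T v⟫ = c * ⟪w, v⟫ :=
  LinearMap.eqOn_span (f := (innerₛₗ 𝕜 w).comp T) (g := c • innerₛₗ 𝕜 w) h hv

theorem inner_map_eq_rayleigh_mul_inner {ψ : ι → F} {T : F →ₗ[𝕜] F}
    (hψ : Pairwise fun i j => ⟪ψ i, ψ j⟫ = 0) (hT : Pairwise fun i j => ⟪ψ i, T (ψ j)⟫ = 0)
    (j : ι) {w : F} (hw : w ∈ span 𝕜 (Set.range ψ)) :
    ⟪w, T (ψ j)⟫ = ⟪ψ j, T (ψ j)⟫ / ⟪ψ j, ψ j⟫ * ⟪w, ψ j⟫ := by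
  refine inner_eq_mul_inner_of_mem_span_left ?_ hw
  rintro _ ⟨i, rfl⟩
  obtain rfl | hij := eq_or_ne i j
  · refine (div_mul_cancel_of_imp fun h => ?_).symm
    simp [inner_self_eq_zero.mp h]
  · rw [hT hij, hψ hij, mul_zero]

theorem inner_map_eq_mul_inner_of_diagonal {ψ : ι → F} {T : F →ₗ[𝕜] F} {u : F} {c : 𝕜}
    (hψ : Pairwise fun i j => ⟪ψ i, ψ j⟫ = 0) (hT : Pairwise fun i j => ⟪ψ i, T (ψ j)⟫ = 0)
    (hu : u ∈ span 𝕜 (Set.range ψ)) (huψ : ∀ j, ⟪u, ψ j⟫ ≠ 0)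
    (huT : ∀ j, ⟪u, T (ψ j)⟫ = c * ⟪u, ψ j⟫)
    {w v : F} (hw : w ∈ span 𝕜 (Set.range ψ)) (hv : v ∈ span 𝕜 (Set.range ψ)) :
    ⟪w, T v⟫ = c * ⟪w, v⟫ := by
  have hμ : ∀ j, ⟪ψ j, T (ψ j)⟫ / ⟪ψ j, ψ j⟫ = c := fun j =>
    mul_right_cancel₀ (huψ j) <| (inner_map_eq_rayleigh_mul_inner hψ hT j hu).symm.trans (huT j)
  refine inner_map_eq_mul_inner_of_mem_span_right ?_ hv
  rintro _ ⟨j, rfl⟩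
  rw [inner_map_eq_rayleigh_mul_inner hψ hT j hw, hμ]

end InnerProductSpace

theorem stmt3_general (d s : ℕ)
    (E : EuclideanSpace ℂ (Fin d) →ₗ[ℂ] EuclideanSpace ℂ (Fin d))
    (S : Finset (Fin d))
    (ψ : Fin s → EuclideanSpace ℂ (Fin d))
    (hψorth : ∀ i i' : Fin s, i ≠ i' → (inner ℂ (ψ i) (ψ i') : ℂ) = 0)
    (hψspan : Submodule.span ℂ (Set.range ψ) =
      Submodule.span ℂ ((fun x : Fin d => EuclideanSpace.single x (1 : ℂ)) '' ↑S))
    (hEψ : ∀ i j : Fin s, i ≠ j → (inner ℂ (ψ i) (E (ψ j)) : ℂ) = 0)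
    (x : Fin d) (hx : x ∈ S)
    (hxE : ∀ y ∈ S, y ≠ x →
      (inner ℂ (EuclideanSpace.single x (1 : ℂ)) (E (EuclideanSpace.single y 1)) : ℂ) = 0)
    (hxψ : ∀ j : Fin s, (inner ℂ (EuclideanSpace.single x (1 : ℂ)) (ψ j) : ℂ) ≠ 0) :
    (∀ y ∈ S, ∀ z ∈ S, y ≠ z →
      (inner ℂ (EuclideanSpace.single y (1 : ℂ)) (E (EuclideanSpace.single z 1)) : ℂ) = 0) ∧
    (∀ y ∈ S, ∀ z ∈ S,
      (inner ℂ (EuclideanSpace.single y (1 : ℂ)) (E (EuclideanSpace.single y 1)) : ℂ) =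
      (inner ℂ (EuclideanSpace.single z (1 : ℂ)) (E (EuclideanSpace.single z 1)) : ℂ)) := by
  set e : Fin d → EuclideanSpace ℂ (Fin d) := fun t => EuclideanSpace.single t 1
  have he : ∀ y z, inner ℂ (e y) (e z) = if y = z then 1 else 0 :=
    orthonormal_iff_ite.mp EuclideanSpace.orthonormal_single
  have heV : ∀ y ∈ S, e y ∈ span ℂ (Set.range ψ) := fun y hy =>
    hψspan ▸ subset_span ⟨y, hy, rfl⟩
  have hψS : ∀ j, ψ j ∈ span ℂ (e '' S) := fun j => hψspan ▸ subset_span (Set.mem_range_self j)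
  have hxT : ∀ j, inner ℂ (e x) (E (ψ j)) = inner ℂ (e x) (E (e x)) * inner ℂ (e x) (ψ j) := by
    refine fun j => inner_map_eq_mul_inner_of_mem_span_right ?_ (hψS j)
    rintro _ ⟨y, hy, rfl⟩
    obtain rfl | hyx := eq_or_ne y x
    · rw [he, if_pos rfl, mul_one]
    · rw [hxE y hy hyx, he, if_neg hyx.symm, mul_zero]
  have hcomp : ∀ y ∈ S, ∀ z ∈ S,
      inner ℂ (e y) (E (e z)) = inner ℂ (e x) (E (e x)) * if y = z then 1 else 0 :=
    fun y hy z hz => he y z ▸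
      inner_map_eq_mul_inner_of_diagonal hψorth hEψ (heV x hx) hxψ hxT (heV y hy) (heV z hz)
  refine ⟨fun y hy z hz hyz => ?_, fun y hy z hz => ?_⟩
  · rw [hcomp y hy z hz, if_neg hyz, mul_zero]
  · rw [hcomp y hy y hy, hcomp z hz z hz, if_pos rfl, if_pos rfl]

/-- Block Trivial Lemma -/
theorem stmt3 (d s : ℕ)
    (E : EuclideanSpace ℂ (Fin d) →ₗ[ℂ] EuclideanSpace ℂ (Fin d))
    (S : Finset (Fin d)) (hS : S.Nonempty) (hs : S.card = s)
    (ψ : Fin s → EuclideanSpace ℂ (Fin d))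
    (hψ0 : ∀ i, ψ i ≠ 0)
    (hψorth : ∀ i i' : Fin s, i ≠ i' → (inner ℂ (ψ i) (ψ i') : ℂ) = 0)
    (hψspan : Submodule.span ℂ (Set.range ψ) =
      Submodule.span ℂ ((fun x : Fin d => EuclideanSpace.single x (1 : ℂ)) '' ↑S))
    (hEψ : ∀ i j : Fin s, i ≠ j → (inner ℂ (ψ i) (E (ψ j)) : ℂ) = 0)
    (x : Fin d) (hx : x ∈ S)
    (hxE : ∀ y ∈ S, y ≠ x →
      (inner ℂ (EuclideanSpace.single x (1 : ℂ)) (E (EuclideanSpace.single y 1)) : ℂ) = 0)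
    (hxψ : ∀ j : Fin s, (inner ℂ (EuclideanSpace.single x (1 : ℂ)) (ψ j) : ℂ) ≠ 0) :
    (∀ y ∈ S, ∀ z ∈ S, y ≠ z →
      (inner ℂ (EuclideanSpace.single y (1 : ℂ)) (E (EuclideanSpace.single z 1)) : ℂ) = 0) ∧
    (∀ y ∈ S, ∀ z ∈ S,
      (inner ℂ (EuclideanSpace.single y (1 : ℂ)) (E (EuclideanSpace.single y 1)) : ℂ) =
      (inner ℂ (EuclideanSpace.single z (1 : ℂ)) (E (EuclideanSpace.single z 1)) : ℂ)) :=
  stmt3_general d s E S ψ hψorth hψspan hEψ x hx hxE hxψ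
end

section
/- The family B₂ ∪ B₃ ∪ B₄ ∪ B₅ ∪ B₁ ∪ {|000⟩} of vectors in ℂ^d ⊗ ℂ^d ⊗ ℂ^d (for d ≥ 2), where B₁ = {|100⟩, |001⟩, |010⟩}, B₂ = {(|00i⟩+|(i-1)(i-1)0⟩)/√2 : 2 ≤ i ≤ d-1}, B₃ = {(|0i0⟩+|(i-1)0(i-1)⟩)/√2 : 2 ≤ i ≤ d-1}, B₄ = {(|0(i-1)(i-1)⟩+|i00⟩)/√2 : 2 ≤ i ≤ d-1}, B₅ = {(|0ij⟩+|ij0⟩+|j0i⟩)/√3 : 1 ≤ i,j ≤ d-1, (i,j) ∉ {(1,1),…,(d-2,d-2)}}, is an orthonormal family of exactly d² + 1 vectors. -/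
open scoped BigOperators

open Fin.NatCast in
/-- |abc⟩ in ℂ^d ⊗ ℂ^d ⊗ ℂ^d, realized as EuclideanSpace on `Fin d × Fin d × Fin d`. -/
noncomputable def ket3 (d : ℕ) [NeZero d] (a b c : ℕ) :
    EuclideanSpace ℂ (Fin d × Fin d × Fin d) :=
  EuclideanSpace.single ((a : Fin d), (b : Fin d), (c : Fin d)) 1

/-- The tripartite construction B₁ ∪ B₂ ∪ B₃ ∪ B₄ ∪ B₅ in ℂ^d ⊗ ℂ^d ⊗ ℂ^d. -/
noncomputable def tripartiteSet (d : ℕ) [NeZero d] :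
    Set (EuclideanSpace ℂ (Fin d × Fin d × Fin d)) :=
  {ket3 d 1 0 0, ket3 d 0 0 1, ket3 d 0 1 0} ∪
  {v | ∃ i, 2 ≤ i ∧ i ≤ d - 1 ∧
    v = (Real.sqrt 2 : ℂ)⁻¹ • (ket3 d 0 0 i + ket3 d (i-1) (i-1) 0)} ∪
  {v | ∃ i, 2 ≤ i ∧ i ≤ d - 1 ∧
    v = (Real.sqrt 2 : ℂ)⁻¹ • (ket3 d 0 i 0 + ket3 d (i-1) 0 (i-1))} ∪
  {v | ∃ i, 2 ≤ i ∧ i ≤ d - 1 ∧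
    v = (Real.sqrt 2 : ℂ)⁻¹ • (ket3 d 0 (i-1) (i-1) + ket3 d i 0 0)} ∪
  {v | ∃ i j, 1 ≤ i ∧ i ≤ d - 1 ∧ 1 ≤ j ∧ j ≤ d - 1 ∧ ¬(i = j ∧ i ≤ d - 2) ∧
    v = (Real.sqrt 3 : ℂ)⁻¹ • (ket3 d 0 i j + ket3 d i j 0 + ket3 d j 0 i)}

/-
Each vector of the family is a normalized indicator `|S|^(-1/2) ∑_{x ∈ S} |x⟩` of a set `S` of basis
triples, so orthonormality amounts to the supports being pairwise disjoint. Label `|000⟩` by `none`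
and the other vectors by pairs `(i, j) ∈ {0, …, d-1}²`: every triple in a support determines the
label of its vector (`tripartiteLabel`), so the supports are disjoint, and there are `d² + 1` labels.
-/

open Finset Function

section NormalizedIndicator

variable {𝕜 ι : Type*} [RCLike 𝕜] [DecidableEq ι]

theorem inner_sum_single_one_sum_single_one [Fintype ι] (s t : Finset ι) :
    inner 𝕜 (∑ x ∈ s, EuclideanSpace.single x (1 : 𝕜)) (∑ x ∈ t, EuclideanSpace.single x 1) =
      #(s ∩ t) := by
  simp [sum_inner, inner_sum, EuclideanSpace.inner_single_left, PiLp.single_apply, inter_comm]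

noncomputable def normalizedIndicator (𝕜 : Type*) [RCLike 𝕜] (s : Finset ι) : EuclideanSpace 𝕜 ι :=
  ((√(#s : ℝ) : 𝕜))⁻¹ • ∑ x ∈ s, EuclideanSpace.single x 1

theorem inner_normalizedIndicator [Fintype ι] (s t : Finset ι) :
    inner 𝕜 (normalizedIndicator 𝕜 s) (normalizedIndicator 𝕜 t) =
      ((#(s ∩ t) / (√(#s : ℝ) * √(#t : ℝ)) : ℝ) : 𝕜) := by
  rw [normalizedIndicator, normalizedIndicator, inner_smul_left, inner_smul_right,
    inner_sum_single_one_sum_single_one, map_inv₀, RCLike.conj_ofReal]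
  push_cast
  ring

theorem orthonormal_normalizedIndicator [Fintype ι] {α : Type*} {S : α → Finset ι}
    (hne : ∀ a, (S a).Nonempty) (hS : Pairwise (Disjoint on S)) :
    Orthonormal 𝕜 fun a ↦ normalizedIndicator 𝕜 (S a) := by
  classical
  refine orthonormal_iff_ite.2 fun a b ↦ ?_
  rw [inner_normalizedIndicator]
  split_ifs with hab
  · subst hab
    have : (0 : ℝ) < #(S a) := by exact_mod_cast (hne a).card_pos
    rw [inter_self, ← sq, Real.sq_sqrt this.le, div_self this.ne', RCLike.ofReal_one]
  · simp [disjoint_iff_inter_eq_empty.mp (hS hab)]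

theorem normalizedIndicator_image {κ : Type*} [DecidableEq κ] {f : κ → ι} {s : Finset κ}
    (hf : Set.InjOn f s) :
    normalizedIndicator 𝕜 (s.image f) =
      ((√(#s : ℝ) : 𝕜))⁻¹ • ∑ x ∈ s, EuclideanSpace.single (f x) 1 := by
  rw [normalizedIndicator, card_image_of_injOn hf, sum_image hf]

end NormalizedIndicator

/- The label `(i, j)` of each vector other than `|000⟩`: `B₁` sits at `(0, 0)`, `(0, 1)`, `(1, 0)`,
`B₂` at `(0, i)`, `B₃` at `(i, 0)`, `B₄` at `(i - 1, i - 1)` and `B₅` at `(i, j)`. -/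
def tripartiteCell (d : ℕ) : ℕ → ℕ → Finset (ℕ × ℕ × ℕ)
  | 0, 0 => {(1, 0, 0)}
  | 0, 1 => {(0, 0, 1)}
  | 1, 0 => {(0, 1, 0)}
  | 0, j + 2 => {(0, 0, j + 2), (j + 1, j + 1, 0)}
  | i + 2, 0 => {(0, i + 2, 0), (i + 1, 0, i + 1)}
  | i + 1, j + 1 =>
    if i = j ∧ i + 1 ≤ d - 2 then {(0, i + 1, i + 1), (i + 2, 0, 0)}
    else {(0, i + 1, j + 1), (i + 1, j + 1, 0), (j + 1, 0, i + 1)}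

def tripartiteLabel (d : ℕ) : ℕ × ℕ × ℕ → Option (ℕ × ℕ)
  | (a, b, c) =>
    if a = 0 then (if b = 0 ∧ c = 0 then none else some (b, c))
    else if b = 0 ∧ c = 0 then some (if a = 1 then (0, 0) else (a - 1, a - 1))
    else if c = 0 then some (if a = b ∧ a ≤ d - 2 then (0, a + 1) else (a, b))
    else if b = 0 then some (if a = c ∧ a ≤ d - 2 then (a + 1, 0) else (c, a))
    else none

theorem tripartiteLabel_eq_of_mem_tripartiteCell {d i j : ℕ} {y : ℕ × ℕ × ℕ} (hi : i < d)
    (hj : j < d) (hy : y ∈ tripartiteCell d i j) : tripartiteLabel d y = some (i, j) := by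
  match i, j with
  | 0, 0 | 0, 1 | 1, 0 | 0, _ + 2 | _ + 2, 0 | _ + 1, _ + 1 =>
    simp only [tripartiteCell] at hy
    try split_ifs at hy
    all_goals
      simp only [mem_insert, mem_singleton] at hy
      rcases hy with rfl | rfl | rfl <;> simp [tripartiteLabel] <;> omega

theorem tripartiteCell_subset_range_product {d i j : ℕ} (hd : 2 ≤ d) (hi : i < d) (hj : j < d) :
    tripartiteCell d i j ⊆ range d ×ˢ range d ×ˢ range d := by
  intro y hy
  simp only [mem_product, mem_range]
  match i, j with
  | 0, 0 | 0, 1 | 1, 0 | 0, _ + 2 | _ + 2, 0 | _ + 1, _ + 1 =>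
    simp only [tripartiteCell] at hy
    try split_ifs at hy
    all_goals
      simp only [mem_insert, mem_singleton] at hy
      rcases hy with rfl | rfl | rfl <;> dsimp only <;> omega

theorem tripartiteCell_nonempty (d i j : ℕ) : (tripartiteCell d i j).Nonempty := by
  match i, j with
  | 0, 0 | 0, 1 | 1, 0 | 0, _ + 2 | _ + 2, 0 => simp [tripartiteCell]
  | _ + 1, _ + 1 => simp only [tripartiteCell]; split_ifs <;> simp

open Fin.NatCast in
def castTriple (d : ℕ) [NeZero d] (y : ℕ × ℕ × ℕ) : Fin d × Fin d × Fin d :=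
  ((y.1 : Fin d), (y.2.1 : Fin d), (y.2.2 : Fin d))

def valTriple {d : ℕ} (x : Fin d × Fin d × Fin d) : ℕ × ℕ × ℕ := (x.1, x.2.1, x.2.2)

theorem valTriple_castTriple {d : ℕ} [NeZero d] {y : ℕ × ℕ × ℕ}
    (hy : y ∈ range d ×ˢ range d ×ˢ range d) : valTriple (castTriple d y) = y := by
  simp only [mem_product, mem_range] at hy
  simp [valTriple, castTriple, Nat.mod_eq_of_lt, hy]

theorem castTriple_injOn (d : ℕ) [NeZero d] :
    Set.InjOn (castTriple d) ↑(range d ×ˢ range d ×ˢ range d) :=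
  Set.LeftInvOn.injOn (f₁' := valTriple) fun _ hy ↦ valTriple_castTriple hy

theorem pairwise_disjoint_of_forall_mem_apply_eq {α β γ : Type*} {S : α → Finset β} {f : β → γ}
    {g : α → γ} (hg : Injective g) (h : ∀ a, ∀ x ∈ S a, f x = g a) :
    Pairwise (Disjoint on S) :=
  fun a b hab ↦ disjoint_left.2 fun x ha hb ↦ hab (hg ((h a x ha).symm.trans (h b x hb)))

def tripartiteSupport (d : ℕ) : Option (Fin d × Fin d) → Finset (ℕ × ℕ × ℕ)
  | none => {(0, 0, 0)}
  | some (i, j) => tripartiteCell d i j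

theorem tripartiteSupport_subset_range_product {d : ℕ} (hd : 2 ≤ d) (o : Option (Fin d × Fin d)) :
    tripartiteSupport d o ⊆ range d ×ˢ range d ×ˢ range d := by
  rcases o with _ | ⟨i, j⟩
  · simp [tripartiteSupport]; omega
  · exact tripartiteCell_subset_range_product hd i.2 j.2

theorem tripartiteLabel_eq_of_mem_tripartiteSupport {d : ℕ} {o : Option (Fin d × Fin d)}
    {y : ℕ × ℕ × ℕ} (hy : y ∈ tripartiteSupport d o) :
    tripartiteLabel d y = o.map (Prod.map Fin.val Fin.val) := by
  rcases o with _ | ⟨i, j⟩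
  · simp_all [tripartiteSupport, tripartiteLabel]
  · exact tripartiteLabel_eq_of_mem_tripartiteCell i.2 j.2 hy

noncomputable def tripartiteVec (d : ℕ) [NeZero d] (o : Option (Fin d × Fin d)) :
    EuclideanSpace ℂ (Fin d × Fin d × Fin d) :=
  normalizedIndicator ℂ ((tripartiteSupport d o).image (castTriple d))

theorem orthonormal_tripartiteVec {d : ℕ} [NeZero d] (hd : 2 ≤ d) :
    Orthonormal ℂ (tripartiteVec d) := by
  refine orthonormal_normalizedIndicator (fun o ↦ ?_) ?_
  · rcases o with _ | ⟨i, j⟩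
    · simp [tripartiteSupport]
    · exact (tripartiteCell_nonempty d i j).image _
  · refine pairwise_disjoint_of_forall_mem_apply_eq (f := tripartiteLabel d ∘ valTriple)
      (Option.map_injective (Prod.map_injective.2 ⟨Fin.val_injective, Fin.val_injective⟩))
      fun o x hx ↦ ?_
    obtain ⟨y, hy, rfl⟩ := mem_image.1 hx
    rw [comp_apply, valTriple_castTriple (tripartiteSupport_subset_range_product hd o hy),
      tripartiteLabel_eq_of_mem_tripartiteSupport hy]

theorem tripartiteVec_eq_smul_sum {d : ℕ} [NeZero d] (hd : 2 ≤ d) (o : Option (Fin d × Fin d)) :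
    tripartiteVec d o = ((√(#(tripartiteSupport d o) : ℝ) : ℂ))⁻¹ •
      ∑ y ∈ tripartiteSupport d o, ket3 d y.1 y.2.1 y.2.2 :=
  normalizedIndicator_image ((castTriple_injOn d).mono (tripartiteSupport_subset_range_product hd o))

theorem tripartiteVec_mem {d : ℕ} [NeZero d] (hd : 2 ≤ d) (o : Option (Fin d × Fin d)) :
    tripartiteVec d o ∈ tripartiteSet d ∪ {ket3 d 0 0 0} := by
  rw [tripartiteVec_eq_smul_sum hd]
  rcases o with _ | ⟨⟨i, hi⟩, ⟨j, hj⟩⟩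
  · simp [tripartiteSupport]
  simp only [tripartiteSupport, tripartiteSet, Set.mem_union, Set.mem_ofPred_eq, Set.mem_insert_iff,
    Set.mem_singleton_iff]
  match i, j with
  | 0, 0 | 0, 1 | 1, 0 => simp [tripartiteCell]
  | 0, j + 2 =>
    exact .inl (.inl (.inl (.inl (.inr ⟨j + 2, by omega, by omega, by simp [tripartiteCell]⟩))))
  | i + 2, 0 =>
    exact .inl (.inl (.inl (.inr ⟨i + 2, by omega, by omega, by simp [tripartiteCell]⟩)))
  | i + 1, j + 1 =>
    simp only [tripartiteCell]
    split_ifs with hij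
    · obtain ⟨rfl, hi⟩ := hij
      exact .inl (.inl (.inr ⟨i + 2, by omega, by omega, by simp⟩))
    · exact .inl (.inr ⟨i + 1, j + 1, by omega, by omega, by omega, by omega, by omega,
        by simp [add_assoc]⟩)

theorem tripartiteSet_union_subset_range {d : ℕ} [NeZero d] (hd : 2 ≤ d) :
    tripartiteSet d ∪ {ket3 d 0 0 0} ⊆ Set.range (tripartiteVec d) := by
  have hd0 : 0 < d := by omega
  have hd1 : 1 < d := hd
  simp only [Set.subset_def, Set.mem_range, tripartiteVec_eq_smul_sum hd]
  rintro v (((((h | ⟨i, hi, hid, rfl⟩) | ⟨i, hi, hid, rfl⟩) | ⟨i, hi, hid, rfl⟩) |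
    ⟨i, j, hi, hid, hj, hjd, hij, rfl⟩) | rfl)
  · rcases h with rfl | rfl | rfl
    · exact ⟨some (⟨0, hd0⟩, ⟨0, hd0⟩), by simp [tripartiteSupport, tripartiteCell]⟩
    · exact ⟨some (⟨0, hd0⟩, ⟨1, hd1⟩), by simp [tripartiteSupport, tripartiteCell]⟩
    · exact ⟨some (⟨1, hd1⟩, ⟨0, hd0⟩), by simp [tripartiteSupport, tripartiteCell]⟩
  · obtain ⟨i, rfl⟩ := Nat.exists_eq_add_of_le' hi
    exact ⟨some (⟨0, hd0⟩, ⟨i + 2, by omega⟩), by simp [tripartiteSupport, tripartiteCell]⟩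
  · obtain ⟨i, rfl⟩ := Nat.exists_eq_add_of_le' hi
    exact ⟨some (⟨i + 2, by omega⟩, ⟨0, hd0⟩), by simp [tripartiteSupport, tripartiteCell]⟩
  · obtain ⟨i, rfl⟩ := Nat.exists_eq_add_of_le' hi
    refine ⟨some (⟨i + 1, by omega⟩, ⟨i + 1, by omega⟩), ?_⟩
    simp [tripartiteSupport, tripartiteCell, show i + 1 ≤ d - 2 by omega]
  · obtain ⟨i, rfl⟩ := Nat.exists_eq_add_of_le' hi
    obtain ⟨j, rfl⟩ := Nat.exists_eq_add_of_le' hj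
    refine ⟨some (⟨i + 1, by omega⟩, ⟨j + 1, by omega⟩), ?_⟩
    simp only [tripartiteSupport, tripartiteCell]
    rw [if_neg (by omega)]
    simp [add_assoc]
  · exact ⟨none, by simp [tripartiteSupport]⟩

theorem tripartiteSet_union_eq_range {d : ℕ} [NeZero d] (hd : 2 ≤ d) :
    tripartiteSet d ∪ {ket3 d 0 0 0} = Set.range (tripartiteVec d) :=
  (tripartiteSet_union_subset_range hd).antisymm (Set.range_subset_iff.2 (tripartiteVec_mem hd))

theorem stmt4 (d : ℕ) (hd : 2 ≤ d) [NeZero d] :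
    Orthonormal ℂ
      ((↑) : (tripartiteSet d ∪ {ket3 d 0 0 0} : Set (EuclideanSpace ℂ (Fin d × Fin d × Fin d)))
        → EuclideanSpace ℂ (Fin d × Fin d × Fin d)) ∧
    (tripartiteSet d ∪ {ket3 d 0 0 0}).ncard = d ^ 2 + 1 := by
  have hv := orthonormal_tripartiteVec hd
  rw [tripartiteSet_union_eq_range hd]
  refine ⟨hv.toSubtypeRange, ?_⟩
  rw [Set.ncard_range_of_injective hv.linearIndependent.injective, Nat.card_eq_fintype_card]
  simp [sq]
end
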